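/- Let μ and μ' be Borel measures on S¹×S¹ such that μ(A×B) = μ'(A×B) < ∞ for every pair of disjoint half-open arcs A, B ⊆ S¹. Then for every half-open arc E ⊆ S¹ one has μ((E×E)∖Δ) = μ'((E×E)∖Δ), where Δ ⊆ S¹×S¹ is the diagonal. -/

import Mathlib

open MeasureTheory Set

noncomputable section

local instance : Fact (0 < 2 * Real.pi) := ⟨by positivity⟩

/-- The representative of a point of the circle `S¹ = ℝ/2πℤ` in the interval `(0, 2π]`. -/
def circleRep (x : AddCircle (2 * Real.pi)) : ℝ :=
  (AddCircle.equivIoc (2 * Real.pi) 0 x : ℝ)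

/-- The open arc of points traversed when moving counterclockwise from `a` to `b`
(for `a ≠ b`): those `x` whose angular distance from `a` is smaller than that of `b`. -/
def Arc (a b : AddCircle (2 * Real.pi)) : Set (AddCircle (2 * Real.pi)) :=
  {x | circleRep (x - a) < circleRep (b - a)}

/-- A half-open arc of `S¹`: a set of the form `{a} ∪ Arc(a,b)` for distinct `a, b`. -/
def IsHalfOpenArc (E : Set (AddCircle (2 * Real.pi))) : Prop :=
  ∃ a b : AddCircle (2 * Real.pi), a ≠ b ∧ E = insert a (Arc a b)

/-!
Measuring angles counterclockwise from the endpoint `b` of the arc `E = {a} ∪ Arc(a,b)` identifies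
`E` injectively and measurably with the real interval `[α, 2π)`, where `α` is the angle from `b`
to `a`. Pulling back the dyadic partitions of `ℝ` gives a refining sequence of countable partitions
of `E` into half-open sub-arcs which eventually separates any two distinct points. So `(E × E) ∖ Δ`
is the increasing union over `n` of the sets of pairs lying in different cells of level `n`, and
each of these is a countable disjoint union of products of disjoint half-open arcs, on which `μ`
and `μ'` agree.
-/

open Real

section Partition

variable {X ι : Type*}

theorem setOf_prod_ne_eq_biUnion (f : X → ι) (E : Set X) :
    {p ∈ E ×ˢ E | f p.1 ≠ f p.2} =
      ⋃ q ∈ (diagonal ι)ᶜ, (E ∩ f ⁻¹' {q.1}) ×ˢ (E ∩ f ⁻¹' {q.2}) := by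
  ext ⟨x, y⟩
  simp [and_assoc]

theorem prod_diff_diagonal_eq_iUnion {g : ℕ → X → ι}
    (hsep : ∀ x y, x ≠ y → ∃ n, g n x ≠ g n y) (E : Set X) :
    E ×ˢ E \ diagonal X = ⋃ n, {p ∈ E ×ˢ E | g n p.1 ≠ g n p.2} := by
  ext ⟨x, y⟩
  simp only [mem_sdiff, mem_diagonal_iff, mem_iUnion, mem_ofPred_eq]
  constructor
  · rintro ⟨hxy, hne⟩
    obtain ⟨n, hn⟩ := hsep x y hne
    exact ⟨n, hxy, hn⟩
  · rintro ⟨n, hxy, hn⟩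
    exact ⟨hxy, fun h => hn (h ▸ rfl)⟩

variable [MeasurableSpace X] {μ μ' : Measure (X × X)} {E : Set X}

theorem measure_setOf_prod_ne_eq [Countable ι] {f : X → ι} (hE : MeasurableSet E)
    (hf : ∀ i, MeasurableSet (f ⁻¹' {i}))
    (h : ∀ i j, i ≠ j → μ ((E ∩ f ⁻¹' {i}) ×ˢ (E ∩ f ⁻¹' {j}))
      = μ' ((E ∩ f ⁻¹' {i}) ×ˢ (E ∩ f ⁻¹' {j}))) :
    μ {p ∈ E ×ˢ E | f p.1 ≠ f p.2} = μ' {p ∈ E ×ˢ E | f p.1 ≠ f p.2} := by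
  have hdisj : (diagonal ι)ᶜ.PairwiseDisjoint
      fun q : ι × ι => (E ∩ f ⁻¹' {q.1}) ×ˢ (E ∩ f ⁻¹' {q.2}) := by
    intro q _ r _ hqr
    refine disjoint_left.2 fun p hq hr => hqr ?_
    simp only [mem_prod, mem_inter_iff, mem_preimage, mem_singleton_iff] at hq hr
    exact Prod.ext (hq.1.2.symm.trans hr.1.2) (hq.2.2.symm.trans hr.2.2)
  have hmeas : ∀ q ∈ (diagonal ι)ᶜ, MeasurableSet ((E ∩ f ⁻¹' {q.1}) ×ˢ (E ∩ f ⁻¹' {q.2})) :=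
    fun q _ => (hE.inter (hf q.1)).prod (hE.inter (hf q.2))
  rw [setOf_prod_ne_eq_biUnion, measure_biUnion (to_countable _) hdisj hmeas,
    measure_biUnion (to_countable _) hdisj hmeas]
  exact tsum_congr fun q => h _ _ q.2

theorem measure_prod_diff_diagonal_eq_of_refining [Countable ι] {g : ℕ → X → ι}
    (hg : ∀ n i, MeasurableSet (g n ⁻¹' {i}))
    (hrefine : ∀ n x y, g (n + 1) x = g (n + 1) y → g n x = g n y)
    (hsep : ∀ x y, x ≠ y → ∃ n, g n x ≠ g n y) (hE : MeasurableSet E)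
    (h : ∀ n i j, i ≠ j → μ ((E ∩ g n ⁻¹' {i}) ×ˢ (E ∩ g n ⁻¹' {j}))
      = μ' ((E ∩ g n ⁻¹' {i}) ×ˢ (E ∩ g n ⁻¹' {j}))) :
    μ (E ×ˢ E \ diagonal X) = μ' (E ×ˢ E \ diagonal X) := by
  have hmono : Monotone fun n => {p ∈ E ×ˢ E | g n p.1 ≠ g n p.2} :=
    monotone_nat_of_le_succ fun n p hp => ⟨hp.1, fun h => hp.2 (hrefine n _ _ h)⟩
  rw [prod_diff_diagonal_eq_iUnion hsep, hmono.measure_iUnion, hmono.measure_iUnion]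
  exact iSup_congr fun n => measure_setOf_prod_ne_eq hE (hg n) (h n)

end Partition

def dyadicIndex (n : ℕ) (r : ℝ) : ℤ := ⌊2 ^ n * r⌋

theorem dyadicIndex_preimage_singleton (n : ℕ) (i : ℤ) :
    dyadicIndex n ⁻¹' {i} = Ico ((i : ℝ) / 2 ^ n) ((i + 1) / 2 ^ n) := by
  ext r
  simp only [mem_preimage, mem_singleton_iff, dyadicIndex, Int.floor_eq_iff, mem_Ico]
  rw [div_le_iff₀' (by positivity), lt_div_iff₀' (by positivity)]

theorem measurable_dyadicIndex (n : ℕ) : Measurable (dyadicIndex n) :=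
  Int.measurable_floor.comp (measurable_const_mul _)

theorem dyadicIndex_succ_ediv_two (n : ℕ) (r : ℝ) :
    dyadicIndex (n + 1) r / 2 = dyadicIndex n r := by
  have h := Int.floor_div_natCast (2 * (2 ^ n * r)) 2
  rw [Nat.cast_ofNat, Nat.cast_ofNat, mul_div_cancel_left₀ _ two_ne_zero] at h
  rw [dyadicIndex, dyadicIndex, pow_succ', mul_assoc, h]

theorem dyadicIndex_eq_of_succ_eq {n : ℕ} {r s : ℝ}
    (h : dyadicIndex (n + 1) r = dyadicIndex (n + 1) s) : dyadicIndex n r = dyadicIndex n s := by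
  rw [← dyadicIndex_succ_ediv_two n r, h, dyadicIndex_succ_ediv_two]

theorem exists_dyadicIndex_ne {r s : ℝ} (h : r ≠ s) : ∃ n, dyadicIndex n r ≠ dyadicIndex n s := by
  obtain ⟨n, hn⟩ := pow_unbounded_of_one_lt |r - s|⁻¹ one_lt_two
  refine ⟨n, fun heq => ?_⟩
  have hclose := Int.abs_sub_lt_one_of_floor_eq_floor heq
  rw [← mul_sub, abs_mul, abs_of_pos (by positivity)] at hclose
  rw [inv_lt_iff_one_lt_mul₀ (abs_pos.2 (sub_ne_zero.2 h))] at hn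
  linarith

theorem circleRep_mem (x : AddCircle (2 * π)) : circleRep x ∈ Ioc 0 (2 * π) := by
  simpa [circleRep] using (AddCircle.equivIoc (2 * π) 0 x).2

theorem circleRep_coe_of_mem {r : ℝ} (h : r ∈ Ioc 0 (2 * π)) :
    circleRep (r : AddCircle (2 * π)) = r :=
  AddCircle.equivIoc_coe_of_mem (by simpa using h)

theorem coe_circleRep (x : AddCircle (2 * π)) : (circleRep x : AddCircle (2 * π)) = x :=
  AddCircle.coe_equivIoc

theorem circleRep_injective : Function.Injective circleRep :=
  Function.LeftInverse.injective coe_circleRep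

theorem injOn_coe_Ioc : InjOn ((↑) : ℝ → AddCircle (2 * π)) (Ioc 0 (2 * π)) :=
  fun r hr s hs h => by rw [← circleRep_coe_of_mem hr, h, circleRep_coe_of_mem hs]

theorem measurable_circleRep : Measurable circleRep :=
  measurable_subtype_coe.comp (AddCircle.measurableEquivIoc (2 * π) 0).measurable

theorem circleRep_lt_two_pi {x : AddCircle (2 * π)} (hx : x ≠ 0) : circleRep x < 2 * π :=
  (circleRep_mem x).2.lt_of_ne fun h => hx (by rw [← coe_circleRep x, h, AddCircle.coe_period])

theorem circleRep_coe_sub {r s : ℝ} (hr : r ∈ Ioc 0 (2 * π)) (hs : s ∈ Ioo 0 (2 * π)) :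
    circleRep ((r - s : ℝ) : AddCircle (2 * π)) = if s < r then r - s else r - s + 2 * π := by
  obtain ⟨hr0, hr1⟩ := hr
  obtain ⟨hs0, hs1⟩ := hs
  split_ifs with hsr
  · exact circleRep_coe_of_mem ⟨by linarith, by linarith⟩
  · rw [← AddCircle.coe_add_period, circleRep_coe_of_mem ⟨by linarith, by linarith⟩]

def angleFrom (b x : AddCircle (2 * π)) : ℝ := circleRep (x - b)

theorem measurable_angleFrom (b : AddCircle (2 * π)) : Measurable (angleFrom b) :=
  measurable_circleRep.comp (measurable_sub_const b)

theorem angleFrom_injective (b : AddCircle (2 * π)) : Function.Injective (angleFrom b) :=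
  fun _ _ h => sub_left_injective (circleRep_injective h)

theorem preimage_angleFrom_Ico (b : AddCircle (2 * π)) {s t : ℝ} (hs : 0 < s) (hst : s < t)
    (ht : t ≤ 2 * π) : angleFrom b ⁻¹' Ico s t = insert (b + s) (Arc (b + s) (b + t)) := by
  ext x
  obtain ⟨r, hr, rfl⟩ : ∃ r ∈ Ioc 0 (2 * π), b + r = x :=
    (AddCircle.eq_coe_Ioc (x - b)).imp fun r ⟨hr, h⟩ => ⟨hr, by rw [h, add_sub_cancel]⟩
  have hts : t - s ∈ Ioc 0 (2 * π) := ⟨by linarith, by linarith⟩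
  simp only [mem_preimage, angleFrom, add_sub_cancel_left, circleRep_coe_of_mem hr,
    mem_insert_iff, Arc, mem_ofPred_eq, add_sub_add_left_eq_sub, ← AddCircle.coe_sub,
    circleRep_coe_sub hr ⟨hs, by linarith⟩, circleRep_coe_of_mem hts, add_right_inj,
    injOn_coe_Ioc.eq_iff hr ⟨hs, by linarith⟩, mem_Ico]
  split_ifs <;> grind [hr.1]

theorem isHalfOpenArc_preimage_angleFrom_Ico (b : AddCircle (2 * π)) {s t : ℝ} (hs : 0 < s)
    (hst : s < t) (ht : t ≤ 2 * π) : IsHalfOpenArc (angleFrom b ⁻¹' Ico s t) :=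
  ⟨b + s, b + t,
    fun h => hst.ne (injOn_coe_Ioc ⟨hs, hst.le.trans ht⟩ ⟨hs.trans hst, ht⟩ (add_left_cancel h)),
    preimage_angleFrom_Ico b hs hst ht⟩

theorem insert_Arc_eq_preimage_angleFrom {a b : AddCircle (2 * π)} (hab : a ≠ b) :
    insert a (Arc a b) = angleFrom b ⁻¹' Ico (angleFrom b a) (2 * π) := by
  have hα := circleRep_mem (a - b)
  rw [angleFrom, preimage_angleFrom_Ico b hα.1 (circleRep_lt_two_pi (sub_ne_zero.2 hab)) le_rfl,
    coe_circleRep, add_sub_cancel, AddCircle.coe_period, add_zero]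

theorem measure_prod_preimage_angleFrom_Ico_eq
    {μ μ' : Measure (AddCircle (2 * π) × AddCircle (2 * π))}
    (harcs : ∀ A B : Set (AddCircle (2 * π)), IsHalfOpenArc A → IsHalfOpenArc B →
      Disjoint A B → μ (A ×ˢ B) = μ' (A ×ˢ B))
    (b : AddCircle (2 * π)) {s t u v : ℝ} (hs : 0 < s) (ht : t ≤ 2 * π) (hu : 0 < u)
    (hv : v ≤ 2 * π) (hdisj : Disjoint (Ico s t) (Ico u v)) :
    μ ((angleFrom b ⁻¹' Ico s t) ×ˢ (angleFrom b ⁻¹' Ico u v))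
      = μ' ((angleFrom b ⁻¹' Ico s t) ×ˢ (angleFrom b ⁻¹' Ico u v)) := by
  rcases lt_or_ge s t with hst | hst
  · rcases lt_or_ge u v with huv | huv
    · exact harcs _ _ (isHalfOpenArc_preimage_angleFrom_Ico b hs hst ht)
        (isHalfOpenArc_preimage_angleFrom_Ico b hu huv hv) (hdisj.preimage _)
    · simp [Ico_eq_empty_of_le huv]
  · simp [Ico_eq_empty_of_le hst]

/-- The case `E = F` in the proof of Lemma 2.7: if two Borel measures on `S¹ × S¹` agree
with finite values on all products `A × B` of disjoint half-open arcs, then they agree on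
the off-diagonal part `(E × E) ∖ Δ` of the square of every half-open arc `E`. -/
theorem measure_offdiag_square_eq_of_eq_on_products_of_disjoint_arcs
    (μ μ' : Measure (AddCircle (2 * Real.pi) × AddCircle (2 * Real.pi)))
    (harcs : ∀ A B : Set (AddCircle (2 * Real.pi)), IsHalfOpenArc A → IsHalfOpenArc B →
      Disjoint A B → μ (A ×ˢ B) = μ' (A ×ˢ B) ∧ μ (A ×ˢ B) < ⊤) :
    ∀ E : Set (AddCircle (2 * Real.pi)), IsHalfOpenArc E →
      μ ((E ×ˢ E) \ Set.diagonal (AddCircle (2 * Real.pi)))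
        = μ' ((E ×ˢ E) \ Set.diagonal (AddCircle (2 * Real.pi))) := by
  rintro _ ⟨a, b, hab, rfl⟩
  set φ := angleFrom b
  have hα : 0 < φ a := (circleRep_mem _).1
  have hcell : ∀ n (i : ℤ), φ ⁻¹' Ico (φ a) (2 * π) ∩ (dyadicIndex n ∘ φ) ⁻¹' {i}
      = φ ⁻¹' Ico (max (φ a) (i / 2 ^ n)) (min (2 * π) ((i + 1) / 2 ^ n)) := fun n i => by
    rw [preimage_comp, ← preimage_inter, dyadicIndex_preimage_singleton, Ico_inter_Ico]
  rw [insert_Arc_eq_preimage_angleFrom hab]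
  refine measure_prod_diff_diagonal_eq_of_refining
    (fun n i => ((measurable_dyadicIndex n).comp (measurable_angleFrom b)) (.singleton i))
    (fun n x y => dyadicIndex_eq_of_succ_eq)
    (fun x y hxy => exists_dyadicIndex_ne ((angleFrom_injective b).ne hxy))
    (measurable_angleFrom b measurableSet_Ico) fun n i j hij => ?_
  rw [hcell, hcell]
  refine measure_prod_preimage_angleFrom_Ico_eq (fun A B hA hB h => (harcs A B hA hB h).1) b
    (lt_max_of_lt_left hα) (min_le_left _ _) (lt_max_of_lt_left hα) (min_le_left _ _) ?_
  rw [← Ico_inter_Ico, ← Ico_inter_Ico, ← dyadicIndex_preimage_singleton,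
    ← dyadicIndex_preimage_singleton]
  exact ((disjoint_singleton.2 hij).preimage _).mono inter_subset_right inter_subset_right
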